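/- arXiv:2506.15758 — 5 statements merged into one kernel-verified Lean document; each statement's English description precedes it below -/
import Mathlib

section
/- Let {x,y}, Z, W be pairwise disjoint node sets in an ADMG G (with x and y single nodes). Then (Z,W) is a valid conditional instrumental set relative to (x,y) in G if and only if (i) no directed path from x to y contains a node of W, (ii) there exists a walk from Z to x that is open given W, and (iii) there does not exist a walk from Z to y that is open given W and does not end with a segment of the form x → … → y (a final subwalk that starts at x and consists solely of directed edges pointing toward y). -/
/-- Edge type of a step on a walk in a mixed graph, relative to the direction of travel:
`fwd` is a directed edge pointing forward, `back` a directed edge pointing backward,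
`bi` a bidirected edge. -/
inductive EdgeDir : Type
  | fwd
  | back
  | bi
  deriving DecidableEq

/-- The edge has an arrowhead at its second endpoint. -/
def EdgeDir.arrowSnd : EdgeDir → Prop
  | .fwd => True
  | .back => False
  | .bi => True

/-- The edge has an arrowhead at its first endpoint. -/
def EdgeDir.arrowFst : EdgeDir → Prop
  | .fwd => False
  | .back => True
  | .bi => True

/-- The common node between consecutive walk edges `e₁, e₂` is a collider:
both edges have an arrowhead at it. -/
def IsColliderPair (e₁ e₂ : EdgeDir) : Prop := e₁.arrowSnd ∧ e₂.arrowFst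

/-- A mixed graph: a set of directed edges and a set of bidirected edges on node type `V`. -/
structure MixedGraph (V : Type) where
  dir : V → V → Prop
  bidir : V → V → Prop

namespace MixedGraph

variable {V : Type}

/-- `G` is an acyclic directed mixed graph: the bidirected edges are symmetric and
the directed edges contain no directed cycle. -/
def IsADMG (G : MixedGraph V) : Prop :=
  (∀ a b, G.bidir a b → G.bidir b a) ∧ ∀ v, ¬ Relation.TransGen G.dir v v

/-- There is an edge of type `e` between `a` and `b` (in this travel direction). -/
def IsEdge (G : MixedGraph V) : EdgeDir → V → V → Prop
  | .fwd, a, b => G.dir a b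
  | .back, a, b => G.dir b a
  | .bi, a, b => G.bidir a b

/-- Walks in a mixed graph. -/
inductive Walk (G : MixedGraph V) : V → V → Type
  | nil (v : V) : Walk G v v
  | cons {a b c : V} (e : EdgeDir) (hab : G.IsEdge e a b) (w : Walk G b c) : Walk G a c

namespace Walk

variable {G : MixedGraph V}

/-- The list of nodes of a walk, in order (with multiplicity). -/
def support : {a b : V} → G.Walk a b → List V
  | a, _, .nil _ => [a]
  | a, _, .cons _ _ w => a :: w.support

/-- The list of edge types along a walk. -/
def edges : {a b : V} → G.Walk a b → List EdgeDir
  | _, _, .nil _ => []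
  | _, _, .cons e _ w => e :: w.edges

/-- All edges of the walk are directed and point toward the end of the walk. -/
def AllFwd : {a b : V} → G.Walk a b → Prop
  | _, _, .nil _ => True
  | _, _, .cons e _ w => e = EdgeDir.fwd ∧ w.AllFwd

/-- Auxiliary predicate: the current node `b` was reached via an edge of type `e₁` and
the walk continues with `w`; every interior node from `b` onward that is a collider is in `W`
and every interior node from `b` onward that is a non-collider is not in `W`. -/
def openFrom (W : Set V) : EdgeDir → (b : V) → {c : V} → G.Walk b c → Prop
  | _, _, _, .nil _ => True
  | e₁, b, _, @Walk.cons _ _ _ m _ e₂ _ w =>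
      (IsColliderPair e₁ e₂ → b ∈ W) ∧ (¬ IsColliderPair e₁ e₂ → b ∉ W) ∧
      openFrom W e₂ m w

/-- A walk is open given `W` if every collider on it lies in `W` and no non-collider
on it lies in `W`. -/
def IsOpen {a b : V} (W : Set V) (w : G.Walk a b) : Prop :=
  match w with
  | .nil _ => True
  | @Walk.cons _ _ _ m _ e _ w' => openFrom W e m w'

/-- The walk ends with a segment of the form `x → ⋯ → end`: it has a final subwalk that
starts at `x` and consists solely of directed edges pointing toward the end of the walk. -/
def EndsWithDirFrom (x : V) : {a b : V} → G.Walk a b → Prop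
  | a, _, .nil _ => a = x
  | a, _, .cons e _ w => (a = x ∧ e = EdgeDir.fwd ∧ w.AllFwd) ∨ w.EndsWithDirFrom x

/-- The first edge of the walk has an arrowhead at the start node. -/
def firstArrowIn : {a b : V} → G.Walk a b → Prop
  | _, _, .nil _ => False
  | _, _, .cons e _ _ => e.arrowFst

/-- The last edge of the walk has an arrowhead at the end node. -/
def lastArrowIn : {a b : V} → G.Walk a b → Prop
  | _, _, .nil _ => False
  | _, _, .cons e _ (.nil _) => e.arrowSnd
  | _, _, .cons _ _ (.cons e h w) => lastArrowIn (.cons e h w)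

/-- For each interior node of the walk, the pair of edges incident to it on the walk,
together with the node itself. -/
def colliderTriples {a b : V} (w : G.Walk a b) : List (EdgeDir × EdgeDir × V) :=
  w.edges.zip (w.edges.tail.zip w.support.tail)

end Walk

/-- `X` and `Z` are d-connected given `C`: some walk from a node of `X` to a node of `Z`
is open given `C`. -/
def dConn (G : MixedGraph V) (X Z C : Set V) : Prop :=
  ∃ x ∈ X, ∃ z ∈ Z, ∃ w : G.Walk x z, w.IsOpen C

/-- The descendants of `x` (including `x` itself). -/
def desc (G : MixedGraph V) (x : V) : Set V := {v | Relation.ReflTransGen G.dir x v}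

/-- The descendants of a set of nodes. -/
def descSet (G : MixedGraph V) (S : Set V) : Set V :=
  {v | ∃ s ∈ S, Relation.ReflTransGen G.dir s v}

/-- The ancestors of a set of nodes (including the set itself). -/
def anc (G : MixedGraph V) (S : Set V) : Set V :=
  {v | ∃ s ∈ S, Relation.ReflTransGen G.dir v s}

/-- The parents of a set of nodes. -/
def pa (G : MixedGraph V) (S : Set V) : Set V := {p | ∃ s ∈ S, G.dir p s}

/-- `causal_G(x,y)`: the nodes `v ≠ x` lying on a proper directed path from `x` to `y`. -/
def causal (G : MixedGraph V) (x y : V) : Set V :=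
  {v | v ≠ x ∧ ∃ w : G.Walk x y, w.AllFwd ∧ w.support.Nodup ∧ v ∈ w.support}

/-- The forbidden nodes `forb_G(x,y) = de_G(causal_G(x,y)) ∪ {x}`. -/
def forb (G : MixedGraph V) (x y : V) : Set V := G.descSet (G.causal x y) ∪ {x}

/-- `G̃`: the graph `G` with every directed edge from `x` to a node of `causal_G(x,y)` removed. -/
def tilde (G : MixedGraph V) (x y : V) : MixedGraph V where
  dir a b := G.dir a b ∧ ¬(a = x ∧ b ∈ G.causal x y)
  bidir := G.bidir

/-- `(Z, W)` is a valid conditional instrumental set relative to `(x, y)` in `G`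
(the graphical criterion of Henckel et al., taken as the definition): the sets
`{x,y}`, `Z`, `W` are pairwise disjoint, `(Z ∪ W) ∩ forb_G(x,y) = ∅`, `x ⊄⊥_G Z | W`,
and `y ⊥_G̃ Z | W`. -/
def ValidCIS (G : MixedGraph V) (x y : V) (Z W : Set V) : Prop :=
  x ≠ y ∧ x ∉ Z ∧ x ∉ W ∧ y ∉ Z ∧ y ∉ W ∧ Disjoint Z W ∧
  (Z ∪ W) ∩ G.forb x y = ∅ ∧
  G.dConn {x} Z W ∧
  ¬ (G.tilde x y).dConn {y} Z W

/-- `W` is a nearest separator with respect to `(y, z, R)` in `H` (with ambient node `x`). -/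
def NearestSep (H : MixedGraph V) (x y z : V) (R : Set V) (W : Set V) : Prop :=
  W ⊆ R ∩ H.anc {y, z} ∧
  ¬ H.dConn {y} {z} W ∧
  ∀ w ∈ W, ∀ W' ⊆ (R ∩ H.anc {y, z}) \ {x, y, w},
    H.dConn {w} {z} W' → H.dConn {y} {z} W'

/-- `dis_{G,W}(u)`: the nodes connected to `u` via a path of bidirected edges with no
node in `W` (with `u ∈ dis_{G,W}(u)`). -/
def dis (G : MixedGraph V) (W : Set V) (u : V) : Set V :=
  {v | Relation.ReflTransGen (fun a b => G.bidir a b ∧ a ∉ W ∧ b ∉ W) u v}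

/-- `dis⁺_{G,W}(u) = (dis_{G,W}(u) ∪ pa_G(dis_{G,W}(u))) ∖ W`. -/
def disPlus (G : MixedGraph V) (W : Set V) (u : V) : Set V :=
  (G.dis W u ∪ G.pa (G.dis W u)) \ W

/-- `W^opt` of Henckel et al. -/
def Wopt (G : MixedGraph V) (x y : V) : Set V := G.disPlus {x} y \ {x, y}

/-- `Z^opt` of Henckel et al. -/
def Zopt (G : MixedGraph V) (x y : V) : Set V :=
  G.disPlus {y} x \ (G.Wopt x y ∪ {x, y})

/-- The latent projection of `G` over the latent nodes `L`: a directed edge exactly when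
`G` has a directed path whose non-endpoint nodes lie in `L`, and a bidirected edge exactly
when `G` has a path whose non-endpoint nodes are non-colliders lying in `L` and whose first
and last edges have an arrowhead at the respective endpoint. -/
def latentProj (G : MixedGraph V) (L : Set V) : MixedGraph V where
  dir a b := a ∉ L ∧ b ∉ L ∧ ∃ w : G.Walk a b,
    w.edges ≠ [] ∧ w.AllFwd ∧ w.support.Nodup ∧ ∀ v ∈ w.support.tail.dropLast, v ∈ L
  bidir a b := a ∉ L ∧ b ∉ L ∧ ∃ w : G.Walk a b,
    w.support.Nodup ∧ w.firstArrowIn ∧ w.lastArrowIn ∧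
    (∀ v ∈ w.support.tail.dropLast, v ∈ L) ∧
    ∀ t ∈ w.colliderTriples, ¬ IsColliderPair t.1 t.2.1

end MixedGraph

/-- The moralization of a DAG with edge relation `E` contains the (undirected) edge
`a − b` (for `a ≠ b`) exactly when `E a b`, or `E b a`, or `a` and `b` have a common child. -/
def MoralEdge {α : Type} (E : α → α → Prop) (a b : α) : Prop :=
  a ≠ b ∧ (E a b ∨ E b a ∨ ∃ c, E a c ∧ E b c)

/-!
Write `D` for the set of descendants of causal nodes, so that `forb_G(x,y) = D ∪ {x}`. When `W`
avoids `D`, an open walk entering a node of `D` along a forward edge must stay directed: its first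
collider would be a descendant of that node, hence in `W ∩ D`.

So if `Z ∪ W` avoids `D`, an open walk from `z ∈ Z` to `y` not ending in `x → ⋯ → y` uses no
removed edge `x → c`: traversed forwards, the rest of the walk would be `c → ⋯ → y`; traversed
backwards, the reversed prefix would be a directed path `c → ⋯ → z`, putting `z` in `D`. Such walks
are thus exactly the open walks of `G̃` (a `G̃`-walk cannot end in `x → c → ⋯ → y`, as `c` would be
causal), which turns (iii) into `y ⊥_G̃ Z | W`.

Conversely, (i)–(iii) force `Z ∪ W` to avoid `D`. If `c` is causal and a node of `W` descends from
`c`, let `v` be the first node of `W` on a directed path from `c` to it; then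
`z ⇝ x → ⋯ → c → ⋯ → v ← ⋯ ← c → ⋯ → y` is open by (i) and (ii), against (iii). Once `W` avoids
`D`, a node `z ∈ Z` below `c` yields the open walk `z ← ⋯ ← c → ⋯ → y`, again against (iii).
-/

namespace EdgeDir

def rev : EdgeDir → EdgeDir
  | .fwd => .back
  | .back => .fwd
  | .bi => .bi

end EdgeDir

theorem isColliderPair_rev {e f : EdgeDir} :
    IsColliderPair f.rev e.rev ↔ IsColliderPair e f := by
  cases e <;> cases f <;> simp [IsColliderPair, EdgeDir.rev, EdgeDir.arrowSnd, EdgeDir.arrowFst]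

namespace MixedGraph

variable {V : Type} {G H : MixedGraph V} {W : Set V} {a b c x y : V}

theorem isEdge_rev (hs : ∀ a b, G.bidir a b → G.bidir b a) {e : EdgeDir}
    (h : G.IsEdge e a b) : G.IsEdge e.rev b a := by
  cases e
  exacts [h, h, hs a b h]

def OpenAt (W : Set V) (e f : EdgeDir) (v : V) : Prop :=
  (IsColliderPair e f → v ∈ W) ∧ (¬ IsColliderPair e f → v ∉ W)

theorem openAt_rev {e f : EdgeDir} : OpenAt W f.rev e.rev a ↔ OpenAt W e f a := by
  simp only [OpenAt, isColliderPair_rev]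

@[simp] theorem openAt_fwd {e : EdgeDir} : OpenAt W e .fwd a ↔ a ∉ W := by
  simp [OpenAt, IsColliderPair, EdgeDir.arrowFst]

@[simp] theorem openAt_back_left {f : EdgeDir} : OpenAt W .back f a ↔ a ∉ W := by
  simp [OpenAt, IsColliderPair, EdgeDir.arrowSnd]

@[simp] theorem openAt_fwd_back : OpenAt W .fwd .back a ↔ a ∈ W := by
  simp [OpenAt, IsColliderPair, EdgeDir.arrowSnd, EdgeDir.arrowFst]

namespace Walk

def append : {a b c : V} → G.Walk a b → G.Walk b c → G.Walk a c
  | _, _, _, .nil _, q => q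
  | _, _, _, .cons e h p, q => .cons e h (p.append q)

@[simp] theorem nil_append (q : G.Walk a b) : (nil a).append q = q := rfl

@[simp] theorem cons_append {m : V} {e : EdgeDir} (h : G.IsEdge e a m) (p : G.Walk m b)
    (q : G.Walk b c) : (cons e h p).append q = cons e h (p.append q) := rfl

@[simp] theorem append_nil (p : G.Walk a b) : p.append (nil b) = p := by
  induction p with
  | nil => rfl
  | cons e h p ih => rw [cons_append, ih]

theorem append_assoc {d : V} (p : G.Walk a b) (q : G.Walk b c) (r : G.Walk c d) :
    (p.append q).append r = p.append (q.append r) := by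
  induction p with
  | nil => rfl
  | cons e h p ih => simp only [cons_append, ih]

section Reverse

variable (hs : ∀ a b, G.bidir a b → G.bidir b a)

def reverseAux : {a b : V} → G.Walk a b → {c : V} → G.Walk a c → G.Walk b c
  | _, _, .nil _, _, acc => acc
  | _, _, .cons e h w, _, acc => w.reverseAux (.cons e.rev (isEdge_rev hs h) acc)

def reverse (w : G.Walk a b) : G.Walk b a := w.reverseAux hs (.nil a)

theorem reverseAux_eq_reverse_append (w : G.Walk a b) (acc : G.Walk a c) :
    w.reverseAux hs acc = (w.reverse hs).append acc := by
  induction w generalizing c with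
  | nil => rfl
  | cons e h w ih =>
    change w.reverseAux hs _ = (w.reverseAux hs _).append acc
    rw [ih, ih (cons _ _ (nil _)), append_assoc]
    rfl

@[simp] theorem reverse_nil : (nil a : G.Walk a a).reverse hs = nil a := rfl

theorem reverse_cons {m : V} {e : EdgeDir} (h : G.IsEdge e a m) (w : G.Walk m b) :
    (cons e h w).reverse hs = (w.reverse hs).append (cons e.rev (isEdge_rev hs h) (nil a)) :=
  reverseAux_eq_reverse_append hs w _

theorem reverse_append (p : G.Walk a b) (q : G.Walk b c) :
    (p.append q).reverse hs = (q.reverse hs).append (p.reverse hs) := by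
  induction p with
  | nil => simp
  | cons e h p ih => simp only [cons_append, reverse_cons, ih, append_assoc]

end Reverse

theorem start_mem_support (w : G.Walk a b) : a ∈ w.support := by
  cases w <;> simp [support]

theorem end_mem_support (w : G.Walk a b) : b ∈ w.support := by
  induction w with
  | nil => simp [support]
  | cons e h w ih => exact List.mem_cons_of_mem _ ih

theorem mem_support_append_iff {u : V} {p : G.Walk a b} {q : G.Walk b c} :
    u ∈ (p.append q).support ↔ u ∈ p.support ∨ u ∈ q.support := by
  induction p with
  | nil => simpa [support] using fun h => h ▸ start_mem_support q
  | cons e h p ih => simp only [cons_append, support, List.mem_cons, ih, or_assoc]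

theorem mem_support_reverse_iff (hs : ∀ a b, G.bidir a b → G.bidir b a) {u : V}
    {w : G.Walk a b} : u ∈ (w.reverse hs).support ↔ u ∈ w.support := by
  induction w with
  | nil => rfl
  | cons e h w ih =>
    rw [reverse_cons, mem_support_append_iff, ih]
    have := start_mem_support w
    simp only [support, List.mem_cons, List.not_mem_nil, or_false]
    grind

/-- If `w` is entered along `e`, then its end is entered along `w.lastDir e`. -/
def lastDir : {a b : V} → G.Walk a b → EdgeDir → EdgeDir
  | _, _, .nil _, e => e
  | _, _, .cons f _ w, _ => w.lastDir f

theorem exists_eq_append_of_mem_support {w : G.Walk a b} (hc : c ∈ w.support) :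
    ∃ (p : G.Walk a c) (q : G.Walk c b), w = p.append q := by
  induction w with
  | nil => obtain rfl : c = _ := List.mem_singleton.mp hc; exact ⟨nil c, nil c, rfl⟩
  | cons e h w ih =>
    rcases List.mem_cons.mp hc with rfl | hc
    · exact ⟨nil c, _, rfl⟩
    · obtain ⟨p, q, rfl⟩ := ih hc
      exact ⟨cons e h p, q, rfl⟩

theorem allFwd_append {p : G.Walk a b} {q : G.Walk b c} :
    (p.append q).AllFwd ↔ p.AllFwd ∧ q.AllFwd := by
  induction p with
  | nil => simp [AllFwd]
  | cons e h p ih => simp only [cons_append, AllFwd, ih, and_assoc]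

theorem lastDir_fwd_of_allFwd {w : G.Walk a b} (hw : w.AllFwd) : w.lastDir .fwd = .fwd := by
  induction w with
  | nil => rfl
  | cons e h w ih => obtain ⟨rfl, hw⟩ := hw; exact ih hw

theorem reflTransGen_of_allFwd {w : G.Walk a b} (hw : w.AllFwd) :
    Relation.ReflTransGen G.dir a b := by
  induction w with
  | nil => exact .refl
  | cons e h w ih => obtain ⟨rfl, hw⟩ := hw; exact .head h (ih hw)

theorem reflTransGen_of_allFwd_of_mem {w : G.Walk a b} (hw : w.AllFwd) {u : V}
    (hu : u ∈ w.support) : Relation.ReflTransGen G.dir a u := by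
  obtain ⟨p, q, rfl⟩ := exists_eq_append_of_mem_support hu
  exact reflTransGen_of_allFwd (allFwd_append.mp hw).1

theorem exists_allFwd_of_reflTransGen (h : Relation.ReflTransGen G.dir a b) :
    ∃ w : G.Walk a b, w.AllFwd := by
  induction h using Relation.ReflTransGen.head_induction_on with
  | refl => exact ⟨nil _, trivial⟩
  | head hab _ ih =>
    obtain ⟨w, hw⟩ := ih
    exact ⟨cons .fwd hab w, rfl, hw⟩

theorem nodup_support_of_allFwd (hA : ∀ v, ¬ Relation.TransGen G.dir v v) {w : G.Walk a b}
    (hw : w.AllFwd) : w.support.Nodup := by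
  induction w with
  | nil => simp [support]
  | @cons u m _ e h w ih =>
    obtain ⟨rfl, hw⟩ := hw
    refine List.nodup_cons.mpr ⟨fun hu => hA u ?_, ih hw⟩
    exact .head' h (reflTransGen_of_allFwd_of_mem hw hu)

theorem endsWithDirFrom_append_of_right (p : G.Walk a b) {q : G.Walk b c}
    (hq : q.EndsWithDirFrom x) : (p.append q).EndsWithDirFrom x := by
  induction p with
  | nil => exact hq
  | cons e h p ih => exact Or.inr (ih hq)

theorem endsWithDirFrom_of_append_cons_back {m : V} {p : G.Walk a b}
    {h : G.IsEdge .back b m} {w : G.Walk m c}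
    (hE : (p.append (cons .back h w)).EndsWithDirFrom x) : w.EndsWithDirFrom x := by
  induction p with
  | nil => exact hE.resolve_left fun h => nomatch h.2.1
  | cons e h' p ih =>
    refine hE.elim (fun hF => ?_) ih
    exact nomatch (allFwd_append.mp hF.2.2).2.1

theorem mem_support_of_endsWithDirFrom {w : G.Walk a b} (hE : w.EndsWithDirFrom x) :
    x ∈ w.support := by
  induction w with
  | nil => exact List.mem_singleton.mpr hE.symm
  | cons e h w ih =>
    rcases hE with ⟨rfl, -⟩ | hE
    exacts [start_mem_support _, List.mem_cons_of_mem _ (ih hE)]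

theorem reflTransGen_of_endsWithDirFrom {w : G.Walk a b} (hE : w.EndsWithDirFrom x) :
    Relation.ReflTransGen G.dir x b := by
  induction w with
  | nil => exact hE ▸ .refl
  | cons e h w ih =>
    rcases hE with ⟨rfl, rfl, hw⟩ | hE
    exacts [.head h (reflTransGen_of_allFwd hw), ih hE]

@[simp] theorem openFrom_cons {m : V} {e f : EdgeDir} {h : G.IsEdge f a m} {w : G.Walk m b} :
    openFrom W e a (cons f h w) ↔ OpenAt W e f a ∧ openFrom W f m w :=
  and_assoc.symm

theorem isOpen_of_openFrom {e : EdgeDir} {w : G.Walk a b} (hw : openFrom W e a w) :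
    w.IsOpen W := by
  cases w with
  | nil => trivial
  | cons f h w => exact (openFrom_cons.mp hw).2

theorem openFrom_append {e : EdgeDir} {p : G.Walk a b} {q : G.Walk b c} :
    openFrom W e a (p.append q) ↔ openFrom W e a p ∧ openFrom W (p.lastDir e) b q := by
  induction p generalizing e with
  | nil => simp [openFrom, lastDir]
  | cons f h p ih => simp only [cons_append, openFrom_cons, ih, lastDir, and_assoc]

theorem isOpen_append {e : EdgeDir} {p : G.Walk a b} {q : G.Walk b c} (hp : p.IsOpen W)
    (hq : openFrom W (p.lastDir e) b q) : (p.append q).IsOpen W := by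
  cases p with
  | nil => exact isOpen_of_openFrom hq
  | cons f h p => exact openFrom_append.mpr ⟨hp, hq⟩

theorem openFrom_of_isOpen_append_cons {m : V} {e : EdgeDir} {p : G.Walk a b}
    {h : G.IsEdge e b m} {s : G.Walk m c} (hw : (p.append (cons e h s)).IsOpen W) :
    openFrom W e m s := by
  cases p with
  | nil => exact hw
  | cons f h' p => exact (openFrom_cons.mp (openFrom_append.mp hw).2).2

theorem isOpen_reverseAux (hs : ∀ a b, G.bidir a b → G.bidir b a) {m d : V} {f : EdgeDir}
    (hf : G.IsEdge f a m) (w : G.Walk m b) (acc : G.Walk a d) (hw : openFrom W f m w)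
    (hacc : openFrom W f.rev a acc) : ((cons f hf w).reverseAux hs acc).IsOpen W := by
  induction w generalizing a f d with
  | nil => exact hacc
  | cons g hg w ih =>
    rw [openFrom_cons] at hw
    exact ih hg _ hw.2 (openFrom_cons.mpr ⟨openAt_rev.mpr hw.1, hacc⟩)

theorem isOpen_reverse (hs : ∀ a b, G.bidir a b → G.bidir b a) {w : G.Walk a b}
    (hw : w.IsOpen W) : (w.reverse hs).IsOpen W := by
  cases w with
  | nil => trivial
  | cons f h w => exact isOpen_reverseAux hs h w _ hw trivial

theorem openFrom_of_allFwd {e : EdgeDir} {w : G.Walk a b} (hw : w.AllFwd)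
    (hW : ∀ u ∈ w.support, u ∉ W) : openFrom W e a w := by
  induction w generalizing e with
  | nil => trivial
  | cons f h w ih =>
    obtain ⟨rfl, hw⟩ := hw
    exact openFrom_cons.mpr ⟨openAt_fwd.mpr (hW _ (start_mem_support _)),
      ih hw fun u hu => hW u (List.mem_cons_of_mem _ hu)⟩

theorem openFrom_reverse_append_of_allFwd (hs : ∀ a b, G.bidir a b → G.bidir b a)
    {w : G.Walk a b} (hw : w.AllFwd) (hW : ∀ u ∈ w.support, u ∉ W) {M : G.Walk a c}
    (hM : openFrom W .back a M) : openFrom W .back b ((w.reverse hs).append M) := by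
  induction w generalizing c with
  | nil => exact hM
  | cons f h w ih =>
    obtain ⟨rfl, hw⟩ := hw
    rw [reverse_cons, append_assoc, cons_append, nil_append]
    exact ih hw (fun u hu => hW u (List.mem_cons_of_mem _ hu))
      (openFrom_cons.mpr ⟨openAt_back_left.mpr (hW _ (List.mem_cons_of_mem _
        (start_mem_support w))), hM⟩)

/-- The first non-forward edge would create a collider at a descendant of `a`. -/
theorem allFwd_of_openFrom_fwd {w : G.Walk a b} (ha : ∀ u ∈ G.desc a, u ∉ W)
    (hw : openFrom W .fwd a w) : w.AllFwd := by
  induction w with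
  | nil => trivial
  | cons f h w ih =>
    rw [openFrom_cons] at hw
    cases f with
    | fwd => exact ⟨rfl, ih (fun u hu => ha u (.head h hu)) hw.2⟩
    | back => exact absurd (hw.1.1 ⟨trivial, trivial⟩) (ha _ .refl)
    | bi => exact absurd (hw.1.1 ⟨trivial, trivial⟩) (ha _ .refl)

section Transfer

variable (H)

def StepsIn : {a b : V} → G.Walk a b → Prop
  | _, _, .nil _ => True
  | _, _, @cons _ _ a m _ e _ w => H.IsEdge e a m ∧ w.StepsIn

def transfer : {a b : V} → (w : G.Walk a b) → w.StepsIn H → H.Walk a b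
  | _, _, .nil v, _ => .nil v
  | _, _, .cons _ _ w, hw => .cons _ hw.1 (w.transfer hw.2)

variable {H}

theorem stepsIn_of_isEdge (hGH : ∀ e a b, G.IsEdge e a b → H.IsEdge e a b) (w : G.Walk a b) :
    w.StepsIn H := by
  induction w with
  | nil => trivial
  | cons e h w ih => exact ⟨hGH _ _ _ h, ih⟩

theorem exists_append_cons_of_not_stepsIn {w : G.Walk a b} (hw : ¬ w.StepsIn H) :
    ∃ (u m : V) (p : G.Walk a u) (e : EdgeDir) (h : G.IsEdge e u m) (s : G.Walk m b),
      w = p.append (cons e h s) ∧ ¬ H.IsEdge e u m := by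
  induction w with
  | nil => exact absurd trivial hw
  | @cons u m _ e h w ih =>
    by_cases he : H.IsEdge e u m
    · obtain ⟨u, m, p, f, h', s, rfl, hf⟩ := ih fun hw' => hw ⟨he, hw'⟩
      exact ⟨u, m, cons e h p, f, h', s, rfl, hf⟩
    · exact ⟨_, _, nil _, e, h, w, rfl, he⟩

theorem openFrom_transfer {e : EdgeDir} {w : G.Walk a b} (hw : w.StepsIn H) :
    openFrom W e a (w.transfer H hw) ↔ openFrom W e a w := by
  induction w generalizing e with
  | nil => rfl
  | cons f h w ih => simp only [transfer, openFrom_cons, ih]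

theorem isOpen_transfer {w : G.Walk a b} (hw : w.StepsIn H) :
    (w.transfer H hw).IsOpen W ↔ w.IsOpen W := by
  cases w with
  | nil => rfl
  | cons f h w => exact openFrom_transfer hw.2

theorem endsWithDirFrom_transfer {w : G.Walk a b} (hw : w.StepsIn H) :
    (w.transfer H hw).EndsWithDirFrom x ↔ w.EndsWithDirFrom x := by
  have allFwd_transfer : ∀ {a b : V} {w : G.Walk a b} (hw : w.StepsIn H),
      (w.transfer H hw).AllFwd ↔ w.AllFwd := by
    intro a b w hw
    induction w with
    | nil => rfl
    | cons f h w ih => exact and_congr_right' (ih hw.2)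
  induction w with
  | nil => rfl
  | cons f h w ih =>
    exact or_congr (and_congr_right' (and_congr_right' (allFwd_transfer hw.2))) (ih hw.2)

end Transfer

end Walk

theorem mem_causal_of_dir (hA : ∀ v, ¬ Relation.TransGen G.dir v v) {m : V}
    (hxm : G.dir x m) (hmy : Relation.ReflTransGen G.dir m y) : m ∈ G.causal x y := by
  obtain ⟨q, hq⟩ := Walk.exists_allFwd_of_reflTransGen hmy
  have hw : (Walk.cons .fwd hxm q).AllFwd := ⟨rfl, hq⟩
  refine ⟨?_, _, hw, Walk.nodup_support_of_allFwd hA hw, ?_⟩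
  · rintro rfl
    exact hA _ (.single hxm)
  · exact List.mem_cons_of_mem _ (Walk.start_mem_support q)

theorem notMem_desc_of_mem_causal (hA : ∀ v, ¬ Relation.TransGen G.dir v v)
    (hc : c ∈ G.causal x y) : x ∉ G.desc c := by
  obtain ⟨hcx, w, hw, -, hcw⟩ := hc
  intro hxc
  rcases Relation.reflTransGen_iff_eq_or_transGen.mp
    (Walk.reflTransGen_of_allFwd_of_mem hw hcw) with rfl | hxc'
  · exact hcx rfl
  · exact hA x (hxc'.trans_left hxc)

theorem mem_forb_of_mem_support {w : G.Walk x y} (hw : w.AllFwd) (hnd : w.support.Nodup)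
    {v : V} (hv : v ∈ w.support) : v ∈ G.forb x y := by
  by_cases hvx : v = x
  · exact Or.inr hvx
  · exact Or.inl ⟨v, ⟨hvx, w, hw, hnd, hv⟩, .refl⟩

theorem isEdge_of_isEdge_tilde {e : EdgeDir} (h : (G.tilde x y).IsEdge e a b) :
    G.IsEdge e a b := by
  cases e
  exacts [h.1, h.1, h]

theorem not_endsWithDirFrom_of_tilde (hA : ∀ v, ¬ Relation.TransGen G.dir v v) (hxy : x ≠ y)
    (w : (G.tilde x y).Walk a y) : ¬ w.EndsWithDirFrom x := by
  intro hE
  rcases Relation.reflTransGen_iff_eq_or_transGen.mp (Walk.reflTransGen_of_endsWithDirFrom hE)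
    with hyx | hxy'
  · exact hxy hyx.symm
  obtain ⟨m, hxm, hmy⟩ := Relation.TransGen.head'_iff.mp hxy'
  have hmy' := Relation.ReflTransGen.mono (fun _ _ h => h.1) _ _ hmy
  exact hxm.2 ⟨rfl, mem_causal_of_dir hA hxm.1 hmy'⟩

theorem stepsIn_tilde_of_isOpen (hs : ∀ a b, G.bidir a b → G.bidir b a)
    (hW : ∀ u ∈ W, u ∉ G.descSet (G.causal x y)) (ha : a ∉ G.descSet (G.causal x y))
    {w : G.Walk a b} (hw : w.IsOpen W) (hE : ¬ w.EndsWithDirFrom x) :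
    w.StepsIn (G.tilde x y) := by
  by_contra hT
  obtain ⟨u, m, p, e, h, s, rfl, hbad⟩ := Walk.exists_append_cons_of_not_stepsIn hT
  have hdesc : ∀ c ∈ G.causal x y, ∀ v ∈ G.desc c, v ∉ W :=
    fun c hc v hv hvW => hW v hvW ⟨c, hc, hv⟩
  cases e with
  | fwd =>
    obtain ⟨rfl, hm⟩ : u = x ∧ m ∈ G.causal x y := not_not.mp fun hn => hbad ⟨h, hn⟩
    have hs' : s.AllFwd :=
      Walk.allFwd_of_openFrom_fwd (hdesc m hm) (Walk.openFrom_of_isOpen_append_cons hw)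
    exact hE (Walk.endsWithDirFrom_append_of_right p (Or.inl ⟨rfl, rfl, hs'⟩))
  | back =>
    obtain ⟨-, hu⟩ : m = x ∧ u ∈ G.causal x y := not_not.mp fun hn => hbad ⟨h, hn⟩
    have hrev := Walk.isOpen_reverse hs hw
    rw [Walk.reverse_append, Walk.reverse_cons, Walk.append_assoc, Walk.cons_append,
      Walk.nil_append] at hrev
    have hp : (p.reverse hs).AllFwd :=
      Walk.allFwd_of_openFrom_fwd (hdesc u hu) (Walk.openFrom_of_isOpen_append_cons hrev)
    exact ha ⟨u, hu, Walk.reflTransGen_of_allFwd hp⟩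
  | bi => exact hbad h

theorem exists_first_entry (hc : c ∉ W) {v : V} (hv : v ∈ W)
    (hcv : Relation.ReflTransGen G.dir c v) :
    ∃ u v', G.dir u v' ∧ v' ∈ W ∧ ∃ q : G.Walk c u, q.AllFwd ∧ ∀ n ∈ q.support, n ∉ W := by
  induction hcv using Relation.ReflTransGen.head_induction_on with
  | refl => exact absurd hv hc
  | @head c c' hcc' _ ih =>
    by_cases hc' : c' ∈ W
    · exact ⟨c, c', hcc', hc', Walk.nil c, trivial, fun n hn => List.mem_singleton.mp hn ▸ hc⟩
    · obtain ⟨u, v', huv', hv', q, hq, hqW⟩ := ih hc'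
      refine ⟨u, v', huv', hv', .cons .fwd hcc' q, ⟨rfl, hq⟩, fun n hn => ?_⟩
      rcases List.mem_cons.mp hn with rfl | hn
      exacts [hc, hqW n hn]

theorem exists_allFwd_avoiding_of_mem_causal
    (h1 : ¬ ∃ w : G.Walk x y, w.AllFwd ∧ w.support.Nodup ∧ ∃ v ∈ w.support, v ∈ W)
    (hc : c ∈ G.causal x y) :
    ∃ (ω₁ : G.Walk x c) (ω₂ : G.Walk c y), ω₁.AllFwd ∧ ω₂.AllFwd ∧
      (∀ u ∈ ω₁.support, u ∉ W) ∧ (∀ u ∈ ω₂.support, u ∉ W) := by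
  obtain ⟨-, ω, hω, hnd, hcω⟩ := hc
  obtain ⟨ω₁, ω₂, rfl⟩ := Walk.exists_eq_append_of_mem_support hcω
  have hW : ∀ u ∈ (ω₁.append ω₂).support, u ∉ W := fun u hu huW => h1 ⟨_, hω, hnd, u, hu, huW⟩
  exact ⟨ω₁, ω₂, (Walk.allFwd_append.mp hω).1, (Walk.allFwd_append.mp hω).2,
    fun u hu => hW u (Walk.mem_support_append_iff.mpr (.inl hu)),
    fun u hu => hW u (Walk.mem_support_append_iff.mpr (.inr hu))⟩

/-- The witness is `t ← ⋯ ← c → ⋯ → y`. -/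
theorem exists_openFrom_back_of_mem_causal (hs : ∀ a b, G.bidir a b → G.bidir b a)
    (hA : ∀ v, ¬ Relation.TransGen G.dir v v)
    (h1 : ¬ ∃ w : G.Walk x y, w.AllFwd ∧ w.support.Nodup ∧ ∃ v ∈ w.support, v ∈ W)
    (hc : c ∈ G.causal x y) {t : V} {q : G.Walk c t} (hq : q.AllFwd)
    (hqW : ∀ u ∈ q.support, u ∉ W) :
    ∃ w : G.Walk t y, Walk.openFrom W .back t w ∧ x ∉ w.support := by
  obtain ⟨-, ω, -, hω, -, hωW⟩ := exists_allFwd_avoiding_of_mem_causal h1 hc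
  refine ⟨(q.reverse hs).append ω, Walk.openFrom_reverse_append_of_allFwd hs hq hqW
    (Walk.openFrom_of_allFwd hω hωW), fun hx => notMem_desc_of_mem_causal hA hc ?_⟩
  rcases Walk.mem_support_append_iff.mp hx with hx | hx
  · exact Walk.reflTransGen_of_allFwd_of_mem hq ((Walk.mem_support_reverse_iff hs).mp hx)
  · exact Walk.reflTransGen_of_allFwd_of_mem hω hx

theorem exists_open_walk_of_mem_descSet_causal (hs : ∀ a b, G.bidir a b → G.bidir b a)
    (hA : ∀ v, ¬ Relation.TransGen G.dir v v) (hxW : x ∉ W)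
    (h1 : ¬ ∃ w : G.Walk x y, w.AllFwd ∧ w.support.Nodup ∧ ∃ v ∈ w.support, v ∈ W)
    {z : V} {p : G.Walk z x} (hp : p.IsOpen W) {v : V} (hv : v ∈ W)
    (hvd : v ∈ G.descSet (G.causal x y)) :
    ∃ w : G.Walk z y, w.IsOpen W ∧ ¬ w.EndsWithDirFrom x := by
  obtain ⟨c, hc, hcv⟩ := hvd
  obtain ⟨ω, -, hω, -, hωW, -⟩ := exists_allFwd_avoiding_of_mem_causal h1 hc
  obtain ⟨u, v', huv', hv', q, hq, hqW⟩ :=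
    exists_first_entry (hωW c (Walk.end_mem_support ω)) hv hcv
  obtain ⟨w, hw, hxw⟩ := exists_openFrom_back_of_mem_causal hs hA h1 hc hq hqW
  have huv : G.IsEdge .fwd u v' := huv'
  have hvu : G.IsEdge .back v' u := huv'
  refine ⟨p.append (ω.append (q.append (.cons .fwd huv (.cons .back hvu w)))), ?_, ?_⟩
  · refine Walk.isOpen_append (e := .fwd) hp ?_
    cases ω with
    | nil => exact absurd rfl hc.1
    | cons f h ω =>
      obtain ⟨rfl, hω⟩ := hω
      simp only [Walk.cons_append, Walk.openFrom_cons, Walk.openFrom_append, openAt_fwd,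
        openAt_fwd_back, Walk.lastDir_fwd_of_allFwd hω, Walk.lastDir_fwd_of_allFwd hq]
      exact ⟨hxW, Walk.openFrom_of_allFwd hω fun n hn => hωW n (List.mem_cons_of_mem _ hn),
        Walk.openFrom_of_allFwd hq hqW, hqW u (Walk.end_mem_support q), hv', hw⟩
  · have hassoc : p.append (ω.append (q.append (.cons .fwd huv (.cons .back hvu w)))) =
        (p.append (ω.append (q.append (.cons .fwd huv (.nil v'))))).append
          (.cons .back hvu w) := by
      simp only [Walk.append_assoc, Walk.cons_append, Walk.nil_append]
    rw [hassoc]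
    exact fun hE => hxw (Walk.mem_support_of_endsWithDirFrom
      (Walk.endsWithDirFrom_of_append_cons_back hE))

theorem notMem_descSet_causal_of_walk_conditions (hs : ∀ a b, G.bidir a b → G.bidir b a)
    (hA : ∀ v, ¬ Relation.TransGen G.dir v v) {Z : Set V} (hxW : x ∉ W)
    (h1 : ¬ ∃ w : G.Walk x y, w.AllFwd ∧ w.support.Nodup ∧ ∃ v ∈ w.support, v ∈ W)
    (h2 : ∃ z ∈ Z, ∃ w : G.Walk z x, w.IsOpen W)
    (h3 : ¬ ∃ z ∈ Z, ∃ w : G.Walk z y, w.IsOpen W ∧ ¬ w.EndsWithDirFrom x) :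
    (∀ v ∈ W, v ∉ G.descSet (G.causal x y)) ∧ ∀ v ∈ Z, v ∉ G.descSet (G.causal x y) := by
  obtain ⟨z, hz, p, hp⟩ := h2
  have hW : ∀ v ∈ W, v ∉ G.descSet (G.causal x y) := fun v hv hvd =>
    h3 ⟨z, hz, exists_open_walk_of_mem_descSet_causal hs hA hxW h1 hp hv hvd⟩
  refine ⟨hW, fun v hv ⟨c, hc, hcv⟩ => ?_⟩
  obtain ⟨q, hq⟩ := Walk.exists_allFwd_of_reflTransGen hcv
  obtain ⟨w, hw, hxw⟩ := exists_openFrom_back_of_mem_causal hs hA h1 hc hq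
    fun u hu huW => hW u huW ⟨c, hc, Walk.reflTransGen_of_allFwd_of_mem hq hu⟩
  exact h3 ⟨v, hv, w, Walk.isOpen_of_openFrom hw,
    fun hE => hxw (Walk.mem_support_of_endsWithDirFrom hE)⟩

theorem dConn_singleton_iff (hs : ∀ a b, G.bidir a b → G.bidir b a) {Z : Set V} :
    G.dConn {x} Z W ↔ ∃ z ∈ Z, ∃ w : G.Walk z x, w.IsOpen W := by
  constructor
  · rintro ⟨x', hx', z, hz, w, hw⟩
    obtain rfl : x = x' := hx'.symm
    exact ⟨z, hz, w.reverse hs, Walk.isOpen_reverse hs hw⟩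
  · rintro ⟨z, hz, w, hw⟩
    exact ⟨x, rfl, z, hz, w.reverse hs, Walk.isOpen_reverse hs hw⟩

theorem dConn_tilde_iff (hs : ∀ a b, G.bidir a b → G.bidir b a)
    (hA : ∀ v, ¬ Relation.TransGen G.dir v v) (hxy : x ≠ y) {Z : Set V}
    (hW : ∀ v ∈ W, v ∉ G.descSet (G.causal x y)) (hZ : ∀ v ∈ Z, v ∉ G.descSet (G.causal x y)) :
    (G.tilde x y).dConn {y} Z W ↔
      ∃ z ∈ Z, ∃ w : G.Walk z y, w.IsOpen W ∧ ¬ w.EndsWithDirFrom x := by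
  have hts : ∀ a b, (G.tilde x y).bidir a b → (G.tilde x y).bidir b a := hs
  rw [dConn_singleton_iff hts]
  constructor
  · rintro ⟨z, hz, t, ht⟩
    have hT := Walk.stepsIn_of_isEdge (fun _ _ _ => isEdge_of_isEdge_tilde) t
    exact ⟨z, hz, _, (Walk.isOpen_transfer hT).mpr ht,
      (Walk.endsWithDirFrom_transfer hT).not.mpr (not_endsWithDirFrom_of_tilde hA hxy t)⟩
  · rintro ⟨z, hz, w, hw, hE⟩
    have hT := stepsIn_tilde_of_isOpen hs hW (hZ z hz) hw hE
    exact ⟨z, hz, _, (Walk.isOpen_transfer hT).mpr hw⟩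

theorem inter_forb_eq_empty_iff {Z : Set V} (hxZ : x ∉ Z) (hxW : x ∉ W) :
    (Z ∪ W) ∩ G.forb x y = ∅ ↔ ∀ v ∈ Z ∪ W, v ∉ G.descSet (G.causal x y) := by
  simp only [Set.eq_empty_iff_forall_notMem, Set.mem_inter_iff, forb, Set.mem_union,
    Set.mem_singleton_iff, not_and, not_or]
  exact forall_congr' fun v => imp_congr_right fun hv =>
    and_iff_left (by rintro rfl; exact hv.elim hxZ hxW)

end MixedGraph

open MixedGraph in
/-- Let `{x,y}`, `Z`, `W` be pairwise disjoint node sets in an ADMG `G`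
(with `x` and `y` single nodes). Then `(Z,W)` is a valid conditional instrumental set
relative to `(x,y)` in `G` if and only if (i) no directed path from `x` to `y` contains a
node of `W`, (ii) there exists a walk from `Z` to `x` that is open given `W`, and
(iii) there does not exist a walk from `Z` to `y` that is open given `W` and does not end
with a segment of the form `x → ⋯ → y`. -/
theorem valid_cis_iff_walk_conditions {V : Type} (G : MixedGraph V) (hG : G.IsADMG)
    (x y : V) (Z W : Set V)
    (hxy : x ≠ y) (hxZ : x ∉ Z) (hxW : x ∉ W) (hyZ : y ∉ Z) (hyW : y ∉ W)
    (hZW : Disjoint Z W) :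
    G.ValidCIS x y Z W ↔
      ((¬ ∃ w : G.Walk x y, w.AllFwd ∧ w.support.Nodup ∧ ∃ v ∈ w.support, v ∈ W) ∧
       (∃ z ∈ Z, ∃ w : G.Walk z x, w.IsOpen W) ∧
       ¬ ∃ z ∈ Z, ∃ w : G.Walk z y, w.IsOpen W ∧ ¬ w.EndsWithDirFrom x) := by
  obtain ⟨hs, hA⟩ := hG
  constructor
  · rintro ⟨-, -, -, -, -, -, hforb, h2, h3⟩
    have hout := (inter_forb_eq_empty_iff hxZ hxW).mp hforb
    have hiff := dConn_tilde_iff hs hA hxy (fun v hv => hout v (.inr hv))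
      fun v hv => hout v (.inl hv)
    refine ⟨fun ⟨w, hw, hnd, v, hv, hvW⟩ => ?_, (dConn_singleton_iff hs).mp h2, hiff.not.mp h3⟩
    exact Set.eq_empty_iff_forall_notMem.mp hforb v ⟨.inr hvW, mem_forb_of_mem_support hw hnd hv⟩
  · rintro ⟨h1, h2, h3⟩
    obtain ⟨hW, hZ⟩ := notMem_descSet_causal_of_walk_conditions hs hA hxW h1 h2 h3
    refine ⟨hxy, hxZ, hxW, hyZ, hyW, hZW, ?_, (dConn_singleton_iff hs).mpr h2,
      (dConn_tilde_iff hs hA hxy hW hZ).not.mpr h3⟩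
    exact (inter_forb_eq_empty_iff hxZ hxW).mpr fun v hv => hv.elim (hZ v) (hW v)
end

section
/- Let X ∈ {0,1}^{p₁×p₂} and Y ∈ {0,1}^{p₂×p₃} be Boolean matrices. Let G be the DAG on the pairwise disjoint node sets A = {a₁,…,a_{p₁}}, B = {b₁,…,b_{p₂}}, C = {c₁,…,c_{p₃}} whose edges are a_i → b_j whenever X_{ij} = 1 and c_j → b_i whenever Y_{ij} = 1. Then for all i ∈ {1,…,p₁} and j ∈ {1,…,p₃}, the moralization of G contains the edge a_i − c_j if and only if the Boolean matrix product entry (X·Y)_{ij} = ⋁_{k=1}^{p₂} (X_{ik} ∧ Y_{kj}) equals 1. -/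
/-- The DAG on node set `A ⊕ B ⊕ C` (with `A = Fin p₁`, `B = Fin p₂`, `C = Fin p₃`)
with edges `aᵢ → bⱼ` whenever `X i j = 1` and `cⱼ → bᵢ` whenever `Y i j = 1`. -/
def bmmGraph {p₁ p₂ p₃ : ℕ} (X : Fin p₁ → Fin p₂ → Bool) (Y : Fin p₂ → Fin p₃ → Bool) :
    (Fin p₁ ⊕ Fin p₂ ⊕ Fin p₃) → (Fin p₁ ⊕ Fin p₂ ⊕ Fin p₃) → Prop
  | Sum.inl i, Sum.inr (Sum.inl k) => X i k = true
  | Sum.inr (Sum.inr j), Sum.inr (Sum.inl k) => Y k j = true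
  | _, _ => False

/-- The Boolean matrix product: `(X·Y)ᵢⱼ = ⋁ₖ (Xᵢₖ ∧ Yₖⱼ)`. -/
def bmm {p₁ p₂ p₃ : ℕ} (X : Fin p₁ → Fin p₂ → Bool) (Y : Fin p₂ → Fin p₃ → Bool)
    (i : Fin p₁) (j : Fin p₃) : Bool :=
  decide (∃ k : Fin p₂, X i k = true ∧ Y k j = true)

/-- Let `X ∈ {0,1}^{p₁×p₂}` and `Y ∈ {0,1}^{p₂×p₃}` be Boolean matrices
and let `G` be the DAG on `A ∪ B ∪ C` with edges `aᵢ → bⱼ` whenever `Xᵢⱼ = 1` and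
`cⱼ → bᵢ` whenever `Yᵢⱼ = 1`. Then for all `i`, `j`, the moralization of `G` contains the
edge `aᵢ − cⱼ` if and only if the Boolean matrix product entry `(X·Y)ᵢⱼ` equals `1`. -/
theorem moralization_edge_iff_bmm_entry {p₁ p₂ p₃ : ℕ}
    (X : Fin p₁ → Fin p₂ → Bool) (Y : Fin p₂ → Fin p₃ → Bool) :
    ∀ (i : Fin p₁) (j : Fin p₃),
      MoralEdge (bmmGraph X Y) (Sum.inl i) (Sum.inr (Sum.inr j)) ↔ bmm X Y i j = true := by
  intro i j
  constructor
  · rintro ⟨-, h | h | ⟨c, hac, hcc⟩⟩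
    · exact absurd h id
    · exact absurd h id
    · rcases c with i' | k | j'
      · exact absurd hac id
      · exact decide_eq_true ⟨k, hac, hcc⟩
      · exact absurd hac id
  · intro h
    obtain ⟨k, hx, hy⟩ := of_decide_eq_true h
    exact ⟨(by simp), Or.inr (Or.inr ⟨Sum.inr (Sum.inl k), hx, hy⟩)⟩
end

section
/- Let G be an ADMG with node set V and let X, Z ⊆ V be disjoint node sets. Define a directed graph H with node set V × {→, ←, ↔} and an edge from state (v₁, n₁) to state (v₂, n₂) exactly when (a) v₂ is an n₂-neighbor of v₁, i.e., n₂ = → and v₁ → v₂ in G, or n₂ = ← and v₂ → v₁ in G, or n₂ = ↔ and v₁ ↔ v₂ in G, and (b) if n₁ ∈ {→, ↔} and n₂ ∈ {←, ↔} then v₁ ∈ Z, and otherwise v₁ ∉ Z. Then for every node y ∈ V ∖ (X ∪ Z), some state (y, n) is reachable in H from the starting set S = {(x, ←) : x ∈ X} if and only if there is a walk from X to y in G that is open given Z (i.e., X and y are d-connected given Z in G). -/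
/-- The state-space graph of the Bayes-Ball reduction for ADMGs: states are pairs of a
node and a neighbor type (`fwd` = `→`, `back` = `←`, `bi` = `↔`). There is a transition
from `(v₁, n₁)` to `(v₂, n₂)` exactly when (a) `v₂` is an `n₂`-neighbor of `v₁` and
(b) if `n₁ ∈ {→, ↔}` and `n₂ ∈ {←, ↔}` then `v₁ ∈ Z`, and otherwise `v₁ ∉ Z`. -/
def BayesBallRel {V : Type} (G : MixedGraph V) (Z : Set V) :
    V × EdgeDir → V × EdgeDir → Prop :=
  fun s t =>
    (match t.2 with
     | EdgeDir.fwd => G.dir s.1 t.1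
     | EdgeDir.back => G.dir t.1 s.1
     | EdgeDir.bi => G.bidir s.1 t.1) ∧
    (IsColliderPair s.2 t.2 → s.1 ∈ Z) ∧
    (¬ IsColliderPair s.2 t.2 → s.1 ∉ Z)

lemma bb_reach_to_walk {V : Type} (G : MixedGraph V) (Z : Set V) (y : V) (n : EdgeDir) :
    ∀ s : V × EdgeDir, Relation.ReflTransGen (BayesBallRel G Z) s (y, n) →
      ∃ w : G.Walk s.1 y, MixedGraph.Walk.openFrom Z s.2 s.1 w := by
  intro s h
  induction h using Relation.ReflTransGen.head_induction_on with
  | refl => exact ⟨.nil y, trivial⟩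
  | head hst _ ih =>
    obtain ⟨w, hw⟩ := ih
    rename_i a c _
    obtain ⟨hedge, h1, h2⟩ := hst
    have he : G.IsEdge c.2 a.1 c.1 := by
      cases h : c.2 <;> simpa [MixedGraph.IsEdge, h] using hedge
    exact ⟨.cons c.2 he w, h1, h2, hw⟩

lemma bb_walk_to_reach {V : Type} (G : MixedGraph V) (Z : Set V) :
    ∀ {b y : V} (e : EdgeDir) (w : G.Walk b y),
      MixedGraph.Walk.openFrom Z e b w →
      ∃ n, Relation.ReflTransGen (BayesBallRel G Z) (b, e) (y, n) := by
  intro b y e w h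
  induction w generalizing e with
  | nil v => exact ⟨e, .refl⟩
  | cons e₂ hab w ih =>
    obtain ⟨h1, h2, h3⟩ := h
    obtain ⟨n, hn⟩ := ih e₂ h3
    refine ⟨n, Relation.ReflTransGen.head ⟨?_, h1, h2⟩ hn⟩
    cases e₂ <;> exact hab

/-- Let `G` be an ADMG and let `X, Z` be disjoint node sets. For every
node `y ∉ X ∪ Z`, some state `(y, n)` is reachable in the state-space graph from the
starting set `{(x, ←) : x ∈ X}` if and only if there is a walk from `X` to `y` in `G` that
is open given `Z`. -/
theorem bayes_ball_reachable_iff_dConnected {V : Type} (G : MixedGraph V) (hG : G.IsADMG)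
    (X Z : Set V) (hXZ : Disjoint X Z) :
    ∀ y : V, y ∉ X ∪ Z →
      ((∃ x ∈ X, ∃ n : EdgeDir,
          Relation.ReflTransGen (BayesBallRel G Z) (x, EdgeDir.back) (y, n)) ↔
        ∃ x ∈ X, ∃ w : G.Walk x y, w.IsOpen Z) := by
  intro y hy
  constructor
  · rintro ⟨x, hx, n, hreach⟩
    obtain ⟨w, hw⟩ := bb_reach_to_walk G Z y n _ hreach
    refine ⟨x, hx, w, ?_⟩
    cases w with
    | nil v => trivial
    | cons e hab w' => exact hw.2.2
  · rintro ⟨x, hx, w, hw⟩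
    refine ⟨x, hx, ?_⟩
    cases w with
    | nil v => exact absurd hx (fun h => hy (Or.inl h))
    | cons e hab w' =>
      obtain ⟨n, hn⟩ := bb_walk_to_reach G Z e w' hw
      refine ⟨n, Relation.ReflTransGen.head ⟨?_, ?_, ?_⟩ hn⟩
      · cases e <;> exact hab
      · intro hcol
        exact absurd hcol.1 (by simp [EdgeDir.arrowSnd])
      · intro _
        exact fun hxZ => (hXZ.le_bot ⟨hx, hxZ⟩ : _)
end

section
/- Let G be a DAG with node set V and let X, Z ⊆ V be disjoint node sets. Define a directed graph H with node set V × {→, ←} and an edge from state (v₁, n₁) to state (v₂, n₂) exactly when (a) n₂ = → and v₁ → v₂ in G, or n₂ = ← and v₂ → v₁ in G, and (b) if n₁ = → and n₂ = ← then v₁ ∈ Z, and otherwise v₁ ∉ Z. Then for every node y ∈ V ∖ (X ∪ Z), some state (y, n) is reachable in H from the starting set S = {(x, ←) : x ∈ X} if and only if there is a walk from X to y in G that is open given Z (i.e., X and y are d-connected given Z in G). -/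
/-- The state-space graph of the Bayes-Ball reduction for DAGs: states are pairs of a node
and a neighbor type (`true` = `→`, `false` = `←`). There is a transition from `(v₁, n₁)`
to `(v₂, n₂)` exactly when (a) `n₂ = →` and `v₁ → v₂`, or `n₂ = ←` and `v₂ → v₁`, and
(b) if `n₁ = →` and `n₂ = ←` then `v₁ ∈ Z`, and otherwise `v₁ ∉ Z`. -/
def BayesBallRelDAG {V : Type} (E : V → V → Prop) (Z : Set V) :
    V × Bool → V × Bool → Prop :=
  fun s t =>
    (if t.2 = true then E s.1 t.1 else E t.1 s.1) ∧
    ((s.2 = true ∧ t.2 = false) → s.1 ∈ Z) ∧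
    (¬ (s.2 = true ∧ t.2 = false) → s.1 ∉ Z)

/-- Edge type corresponding to a Bayes-Ball neighbor type. -/
def dirOfBB : Bool → EdgeDir := fun n => if n then .fwd else .back

lemma isColliderPair_dirOfBB (n m : Bool) :
    IsColliderPair (dirOfBB n) (dirOfBB m) ↔ n = true ∧ m = false := by
  cases n <;> cases m <;>
    simp [dirOfBB, IsColliderPair, EdgeDir.arrowSnd, EdgeDir.arrowFst]

lemma bb_walk_to_reach_s8 {V : Type} (E : V → V → Prop) (Z : Set V) {y : V} :
    ∀ {v : V} (w : (MixedGraph.mk E fun _ _ => False).Walk v y) (n : Bool),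
      MixedGraph.Walk.openFrom Z (dirOfBB n) v w →
      ∃ m, Relation.ReflTransGen (BayesBallRelDAG E Z) (v, n) (y, m) := by
  intro v w
  induction w with
  | nil v => exact fun n _ => ⟨n, Relation.ReflTransGen.refl⟩
  | @cons a b c e hab w ih =>
    intro n hopen
    obtain ⟨c1, c2, c3⟩ := hopen
    cases e with
    | bi => exact absurd hab id
    | fwd =>
      have hv : a ∉ Z := by
        apply c2
        rw [show EdgeDir.fwd = dirOfBB true from rfl, isColliderPair_dirOfBB]
        simp
      have hstep : BayesBallRelDAG E Z (a, n) (b, true) := by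
        refine ⟨hab, ?_, fun _ => hv⟩
        simp
      obtain ⟨m, hm⟩ := ih true c3
      exact ⟨m, Relation.ReflTransGen.head hstep hm⟩
    | back =>
      have hstep : BayesBallRelDAG E Z (a, n) (b, false) := by
        refine ⟨hab, ?_, ?_⟩
        · intro hp
          apply c1
          rw [show EdgeDir.back = dirOfBB false from rfl, isColliderPair_dirOfBB]
          exact ⟨hp.1, rfl⟩
        · intro hnc
          apply c2
          rw [show EdgeDir.back = dirOfBB false from rfl, isColliderPair_dirOfBB]
          simpa using hnc
      obtain ⟨m, hm⟩ := ih false c3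
      exact ⟨m, Relation.ReflTransGen.head hstep hm⟩

lemma bb_reach_to_walk_s8 {V : Type} (E : V → V → Prop) (Z : Set V) {y : V} {n : Bool} :
    ∀ {s : V × Bool},
      Relation.ReflTransGen (BayesBallRelDAG E Z) s (y, n) →
      ∃ w : (MixedGraph.mk E fun _ _ => False).Walk s.1 y,
        MixedGraph.Walk.openFrom Z (dirOfBB s.2) s.1 w := by
  intro s h
  induction h using Relation.ReflTransGen.head_induction_on with
  | refl => exact ⟨MixedGraph.Walk.nil y, trivial⟩
  | @head a c hr _ ih =>
    obtain ⟨w, hw⟩ := ih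
    obtain ⟨h1, h2, h3⟩ := hr
    have hedge : (MixedGraph.mk E fun _ _ => False).IsEdge (dirOfBB c.2) a.1 c.1 := by
      cases hc : c.2 <;> simp [hc] at h1 <;> simpa [dirOfBB, hc, MixedGraph.IsEdge]
    refine ⟨MixedGraph.Walk.cons (dirOfBB c.2) hedge w, ?_, ?_, hw⟩
    · rw [isColliderPair_dirOfBB]
      exact fun hp => h2 ⟨hp.1, hp.2⟩
    · rw [isColliderPair_dirOfBB]
      exact fun hp => h3 hp

/-- Let `G` be a DAG with directed edge relation `E` and let `X, Z` be
disjoint node sets. For every node `y ∉ X ∪ Z`, some state `(y, n)` is reachable in the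
state-space graph from the starting set `{(x, ←) : x ∈ X}` if and only if there is a walk
from `X` to `y` in `G` that is open given `Z` (walks of the DAG are walks of the mixed
graph with no bidirected edges). -/
theorem bayes_ball_reachable_iff_dConnected_dag {V : Type} (E : V → V → Prop)
    (hacyclic : ∀ v, ¬ Relation.TransGen E v v)
    (X Z : Set V) (hXZ : Disjoint X Z) :
    ∀ y : V, y ∉ X ∪ Z →
      ((∃ x ∈ X, ∃ n : Bool,
          Relation.ReflTransGen (BayesBallRelDAG E Z) (x, false) (y, n)) ↔
        ∃ x ∈ X, ∃ w : (MixedGraph.mk E fun _ _ => False).Walk x y, w.IsOpen Z) := by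
  intro y hy
  constructor
  · rintro ⟨x, hx, n, hreach⟩
    obtain ⟨w, hw⟩ := bb_reach_to_walk_s8 E Z hreach
    refine ⟨x, hx, w, ?_⟩
    cases w with
    | nil => trivial
    | cons e hab w' => exact hw.2.2
  · rintro ⟨x, hx, w, hw⟩
    have hxZ : x ∉ Z := fun hz => hXZ.le_bot ⟨hx, hz⟩ |>.elim
    refine ⟨x, hx, ?_⟩
    cases w with
    | nil =>
      exact ⟨false, Relation.ReflTransGen.refl⟩
    | @cons a b c e hab w' =>
      cases e with
      | bi => exact absurd hab id
      | fwd =>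
        have hstep : BayesBallRelDAG E Z (x, false) (b, true) := by
          refine ⟨hab, ?_, fun _ => hxZ⟩
          simp
        obtain ⟨m, hm⟩ := bb_walk_to_reach_s8 E Z w' true hw
        exact ⟨m, Relation.ReflTransGen.head hstep hm⟩
      | back =>
        have hstep : BayesBallRelDAG E Z (x, false) (b, false) := by
          refine ⟨hab, ?_, fun _ => hxZ⟩
          simp
        obtain ⟨m, hm⟩ := bb_walk_to_reach_s8 E Z w' false hw
        exact ⟨m, Relation.ReflTransGen.head hstep hm⟩
end

section
/- Let {x,y}, Z, W be pairwise disjoint node sets in an ADMG G (with x and y single nodes) such that (Z ∪ W) ∩ forb_G(x,y) = ∅. Then x ⊄⊥_G Z | W if and only if x ⊄⊥_{G̃} Z | W. -/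
namespace MixedGraph

variable {V : Type} {G : MixedGraph V}

lemma Walk.start_mem_support_s9 : ∀ {a b : V} (w : G.Walk a b), a ∈ w.support
  | _, _, .nil v => by simp [Walk.support]
  | _, _, .cons e h w => by simp [Walk.support]

lemma Walk.isOpen_of_openFrom_s9 {W : Set V} {e : EdgeDir} {b c : V} {w : G.Walk b c}
    (h : Walk.openFrom W e b w) : w.IsOpen W := by
  cases w with
  | nil => trivial
  | cons e' h' w' => exact h.2.2

lemma isEdge_of_tilde {x y : V} {e : EdgeDir} {a b : V}
    (h : (G.tilde x y).IsEdge e a b) : G.IsEdge e a b := by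
  cases e
  · exact h.1
  · exact h.1
  · exact h

lemma isEdge_tilde {x y : V} {e : EdgeDir} {a m : V} (h : G.IsEdge e a m)
    (ha : a ≠ x) (hm : m ≠ x) : (G.tilde x y).IsEdge e a m := by
  cases e
  · exact ⟨h, fun hc => ha hc.1⟩
  · exact ⟨h, fun hc => hm hc.1⟩
  · exact h

def Walk.lift {x y : V} : ∀ {a b : V}, (G.tilde x y).Walk a b → G.Walk a b
  | _, _, .nil v => .nil v
  | _, _, .cons e h w => .cons e (isEdge_of_tilde h) w.lift

lemma Walk.openFrom_lift {x y : V} (W : Set V) :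
    ∀ {a b : V} (e : EdgeDir) (w : (G.tilde x y).Walk a b),
      Walk.openFrom W e a w.lift ↔ Walk.openFrom W e a w
  | _, _, e, .nil v => Iff.rfl
  | _, _, e, .cons e₂ h w => by
      simp only [Walk.lift, Walk.openFrom]
      exact and_congr Iff.rfl (and_congr Iff.rfl (Walk.openFrom_lift W e₂ w))

lemma Walk.isOpen_lift {x y : V} (W : Set V) {a b : V} (w : (G.tilde x y).Walk a b)
    (h : w.IsOpen W) : (Walk.lift w).IsOpen W := by
  cases w with
  | nil => trivial
  | cons e h' w' =>
      exact (Walk.openFrom_lift W e w').mpr h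

/-- Step 1: from an open walk through `x`, extract an open walk starting at the last
occurrence of `x`. -/
lemma exists_open_from {W : Set V} {z : V} (x : V) :
    ∀ {a : V} (w : G.Walk a z), w.IsOpen W → x ∈ w.support →
    ∃ w' : G.Walk x z, w'.IsOpen W ∧ ∀ v ∈ w'.support.tail, v ≠ x := by
  intro a w
  induction w with
  | nil v =>
      intro _ hx
      simp [Walk.support] at hx
      subst hx
      exact ⟨.nil x, trivial, by simp [Walk.support]⟩
  | cons e h w ih =>
      intro hopen hx
      by_cases hx2 : x ∈ w.support
      · exact ih (Walk.isOpen_of_openFrom_s9 hopen) hx2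
      · simp [Walk.support] at hx
        rcases hx with hx | hx
        · subst hx
          exact ⟨.cons e h w, hopen, by
            simp only [Walk.support, List.tail_cons]
            intro v hv hvx; exact hx2 (hvx ▸ hv)⟩
        · exact absurd hx hx2

/-- Step 3: an open continuation reached by an arrowhead-in directed edge, starting in
the descendants of `causal`, can never leave those descendants, hence cannot reach `Z`. -/
lemma no_escape {x y : V} {Z W : Set V}
    (hW : ∀ v ∈ G.descSet (G.causal x y), v ∉ W)
    (hZ : ∀ v ∈ G.descSet (G.causal x y), v ∉ Z) :
    ∀ {c z : V} (w : G.Walk c z), c ∈ G.descSet (G.causal x y) → z ∈ Z →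
      ¬ Walk.openFrom W EdgeDir.fwd c w := by
  intro c z w
  induction w with
  | nil v => intro hc hz _; exact hZ _ hc hz
  | cons e h w ih =>
      intro hc hz hopen
      obtain ⟨h1, _, h3⟩ := hopen
      cases e with
      | fwd =>
          obtain ⟨s, hs, hsc⟩ := hc
          exact ih ⟨s, hs, hsc.tail h⟩ hz h3
      | back => exact hW _ hc (h1 ⟨trivial, trivial⟩)
      | bi => exact hW _ hc (h1 ⟨trivial, trivial⟩)

/-- Step 2: a walk avoiding `x` entirely (after its start) transfers to `G̃`. -/
lemma exists_tilde_tail {x y : V} :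
    ∀ {a b : V} (w : G.Walk a b), a ≠ x → (∀ v ∈ w.support.tail, v ≠ x) →
    ∃ w' : (G.tilde x y).Walk a b,
      ∀ (W : Set V) (e : EdgeDir), Walk.openFrom W e a w' ↔ Walk.openFrom W e a w := by
  intro a b w
  induction w with
  | nil v => intro _ _; exact ⟨.nil v, fun W e => Iff.rfl⟩
  | @cons a m b e h w ih =>
      intro ha htail
      have hm : m ≠ x := htail m (by simpa [Walk.support] using Walk.start_mem_support_s9 w)
      have htail' : ∀ v ∈ w.support.tail, v ≠ x := by
        intro v hv
        exact htail v (by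
          simp only [Walk.support, List.tail_cons]
          exact List.mem_of_mem_tail hv)
      obtain ⟨w', hw'⟩ := ih hm htail'
      refine ⟨.cons e (isEdge_tilde h ha hm) w', ?_⟩
      intro W e₁
      simp only [Walk.openFrom]
      exact and_congr Iff.rfl (and_congr Iff.rfl (hw' W e))

end MixedGraph

/-- Let `{x,y}`, `Z`, `W` be pairwise disjoint node sets in an ADMG `G`
(with `x` and `y` single nodes) such that `(Z ∪ W) ∩ forb_G(x,y) = ∅`. Then
`x ⊄⊥_G Z | W` if and only if `x ⊄⊥_G̃ Z | W`. -/
theorem dConn_iff_dConn_tilde {V : Type} (G : MixedGraph V) (hG : G.IsADMG)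
    (x y : V) (Z W : Set V)
    (hxy : x ≠ y) (hxZ : x ∉ Z) (hxW : x ∉ W) (hyZ : y ∉ Z) (hyW : y ∉ W)
    (hZW : Disjoint Z W)
    (hforb : (Z ∪ W) ∩ G.forb x y = ∅) :
    G.dConn {x} Z W ↔ (G.tilde x y).dConn {x} Z W := by
  constructor
  · rintro ⟨x', hx', z, hz, w, hopen⟩
    obtain rfl : x = x' := (hx' : x' = x).symm
    have hforb' : ∀ v, v ∈ G.forb x y → v ∉ Z ∧ v ∉ W := by
      intro v hv
      constructor <;> intro hmem
      · exact Set.eq_empty_iff_forall_notMem.mp hforb v ⟨Or.inl hmem, hv⟩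
      · exact Set.eq_empty_iff_forall_notMem.mp hforb v ⟨Or.inr hmem, hv⟩
    have hW : ∀ v ∈ G.descSet (G.causal x y), v ∉ W :=
      fun v hv => (hforb' v (Or.inl hv)).2
    have hZ' : ∀ v ∈ G.descSet (G.causal x y), v ∉ Z :=
      fun v hv => (hforb' v (Or.inl hv)).1
    obtain ⟨w₁, hopen₁, htail⟩ :=
      MixedGraph.exists_open_from x w hopen (MixedGraph.Walk.start_mem_support_s9 w)
    cases w₁ with
    | nil => exact absurd hz hxZ
    | @cons _ m _ e h w₂ =>
        have htail2 : ∀ v ∈ w₂.support.tail, v ≠ x := by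
          intro v hv
          exact htail v (by
            simp only [MixedGraph.Walk.support, List.tail_cons]
            exact List.mem_of_mem_tail hv)
        have hm : m ≠ x :=
          htail m (by simpa [MixedGraph.Walk.support] using
            MixedGraph.Walk.start_mem_support_s9 w₂)
        obtain ⟨w₂', hw₂'⟩ := MixedGraph.exists_tilde_tail (x := x) (y := y) w₂ hm htail2
        have hedge : (G.tilde x y).IsEdge e x m := by
          cases e with
          | fwd =>
              refine ⟨h, ?_⟩
              rintro ⟨-, hcaus⟩
              exact MixedGraph.no_escape hW hZ' w₂
                ⟨m, hcaus, Relation.ReflTransGen.refl⟩ hz hopen₁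
          | back => exact ⟨h, fun hc => hm hc.1⟩
          | bi => exact h
        refine ⟨x, rfl, z, hz, .cons e hedge w₂', ?_⟩
        exact (hw₂' W e).mpr hopen₁
  · rintro ⟨x', hx', z, hz, w, hopen⟩
    obtain rfl : x = x' := (hx' : x' = x).symm
    exact ⟨x, rfl, z, hz, w.lift, MixedGraph.Walk.isOpen_lift W w hopen⟩
end
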